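/- arXiv:2008.04282 — 2 statements merged into one kernel-verified Lean document; each statement's English description precedes it below -/
import Mathlib

section
/- Let G be a connected graph of diameter D. The threshold strong dimension τ_s(G) equals the minimum cardinality of a set W ⊆ V(G) for which there exists a W-resolved embedding φ of G in the strong product of |W| copies of P_{D+1} such that φ(G) is an isometric subgraph of P_{D+1}^{⊠,|W|}. -/
open SimpleGraph

/-- The strong product of `k` copies of the path `P_n` (vertices labeled `0,…,n-1`). -/
def strongPow (n k : ℕ) : SimpleGraph (Fin k → Fin n) where
  Adj x y := x ≠ y ∧ ∀ i, ((x i : ℤ) - (y i : ℤ)).natAbs ≤ 1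
  symm := ⟨fun x y h => ⟨h.1.symm, fun i => by have := h.2 i; omega⟩⟩
  loopless := ⟨fun x h => h.1 rfl⟩

/-- `w` strongly resolves `u` and `v`: `v` lies on a shortest `u`–`w` path or
`u` lies on a shortest `v`–`w` path. -/
def stronglyResolves {V : Type*} (G : SimpleGraph V) (w u v : V) : Prop :=
  G.dist u w = G.dist u v + G.dist v w ∨ G.dist v w = G.dist v u + G.dist u w

/-- `W` is a strong resolving set of `G`. -/
def isStrongResolvingSet {V : Type*} (G : SimpleGraph V) (W : Set V) : Prop :=
  ∀ u v : V, u ≠ v → ∃ w ∈ W, stronglyResolves G w u v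

/-- The strong dimension `β_s(G)`. -/
noncomputable def strongDim (V : Type*) [Fintype V] (G : SimpleGraph V) : ℕ :=
  sInf {n | ∃ W : Finset V, W.card = n ∧ isStrongResolvingSet G ↑W}

/-- `u` and `v` are mutually maximally distant in `G`. -/
def mutuallyMaxDistant {V : Type*} (G : SimpleGraph V) (u v : V) : Prop :=
  (∀ x, G.Adj v x → G.dist u x ≤ G.dist u v) ∧ (∀ x, G.Adj u x → G.dist v x ≤ G.dist v u)

/-- The strong resolving graph `G_SR`. -/
def strongResolvingGraph {V : Type*} (G : SimpleGraph V) : SimpleGraph V where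
  Adj u v := u ≠ v ∧ mutuallyMaxDistant G u v
  symm := ⟨fun u v h => ⟨h.1.symm, h.2.2, h.2.1⟩⟩
  loopless := ⟨fun u h => h.1 rfl⟩

/-- The vertex covering number `α(H)`. -/
noncomputable def coverNumber (V : Type*) [Fintype V] (H : SimpleGraph V) : ℕ :=
  sInf {n | ∃ C : Finset V, C.card = n ∧ ∀ u v, H.Adj u v → u ∈ C ∨ v ∈ C}

/-- The threshold strong dimension `τ_s(G)`. -/
noncomputable def thresholdStrongDim (V : Type*) [Fintype V] (G : SimpleGraph V) : ℕ :=
  sInf {n | ∃ H : SimpleGraph V, G ≤ H ∧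
    ∃ W : Finset V, W.card = n ∧ isStrongResolvingSet H ↑W}

/-- A `W`-resolved embedding of `G` in the strong product of `k` copies of `P_{D+1}`,
where `W` is enumerated by `w : Fin k → V`.  The induced subgraph `φ(G)` is represented
by the comap (pullback) of the strong product along the injective map `φ`. -/
def IsWResolvedEmbedding {V : Type*} (G : SimpleGraph V) (D k : ℕ) (w : Fin k → V)
    (φ : V → (Fin k → Fin (D + 1))) : Prop :=
  Function.Injective φ ∧
  (∀ u v, G.Adj u v → (strongPow (D + 1) k).Adj (φ u) (φ v)) ∧
  ∀ x i, ((φ x i : ℕ)) = (SimpleGraph.comap φ (strongPow (D + 1) k)).dist x (w i)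

/-- The image `φ(G)` is an isometric subgraph of the strong product. -/
def IsIsometricImage {V : Type*} (D k : ℕ) (φ : V → (Fin k → Fin (D + 1))) : Prop :=
  ∀ u v, (SimpleGraph.comap φ (strongPow (D + 1) k)).dist u v
      = (strongPow (D + 1) k).dist (φ u) (φ v)

/-- `W` is a (metric) resolving set of `G`. -/
def isResolvingSet {V : Type*} (G : SimpleGraph V) (W : Set V) : Prop :=
  ∀ u v : V, u ≠ v → ∃ w ∈ W, G.dist u w ≠ G.dist v w

/-- The metric dimension `β(G)`. -/
noncomputable def metricDim (V : Type*) [Fintype V] (G : SimpleGraph V) : ℕ :=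
  sInf {n | ∃ W : Finset V, W.card = n ∧ isResolvingSet G ↑W}

/-! A vertex `w` strongly resolves `u` and `v` exactly when `d(u,v) = |d(u,w) - d(v,w)|`, while the
triangle inequality bounds every `|d(u,w) - d(v,w)|` by `d(u,v)`. Hence `W` strongly resolves a
connected graph `H` iff `x ↦ (d_H(x,w))_{w ∈ W}` is an isometry into the strong product of paths,
whose metric is the `ℓ^∞` distance. For `H ⊇ G` these coordinates are at most `diam G`, which gives
the embedding; conversely, the graph pulled back from the strong product along an isometric
`W`-resolved embedding contains `G` and is strongly resolved by `W`. -/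

open Finset

lemma Finset.exists_injective_image_univ_eq {V : Type*} [DecidableEq V] (W : Finset V) :
    ∃ w : Fin W.card → V, Function.Injective w ∧ univ.image w = W := by
  refine ⟨fun i => W.equivFin.symm i, Subtype.val_injective.comp W.equivFin.symm.injective, ?_⟩
  ext v
  simp only [mem_image, mem_univ, true_and]
  exact ⟨fun ⟨i, hi⟩ => hi ▸ (W.equivFin.symm i).2, fun hv => ⟨W.equivFin ⟨v, hv⟩, by simp⟩⟩

namespace SimpleGraph

variable {V X : Type*}

lemma Reachable.natAbs_sub_le_dist {G : SimpleGraph V} (f : V → ℤ)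
    (hf : ∀ a b, G.Adj a b → (f a - f b).natAbs ≤ 1) {u v : V} (h : G.Reachable u v) :
    (f u - f v).natAbs ≤ G.dist u v := by
  obtain ⟨p, hp⟩ := h.exists_walk_length_eq_dist
  rw [← hp]
  clear hp h
  induction p with
  | nil => simp
  | cons hadj _ ih =>
    have := hf _ _ hadj
    rw [Walk.length_cons]
    omega

lemma Connected.natAbs_dist_sub_dist_le {G : SimpleGraph V} (hG : G.Connected) (u v w : V) :
    ((G.dist u w : ℤ) - G.dist v w).natAbs ≤ G.dist u v := by
  have := hG.dist_triangle (u := u) (v := v) (w := w)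
  have := hG.dist_triangle (u := v) (v := u) (w := w)
  have : G.dist v u = G.dist u v := dist_comm
  omega

lemma Connected.dist_le_diam_of_le [Finite V] {G H : SimpleGraph V} (hG : G.Connected)
    (hGH : G ≤ H) (x y : V) : H.dist x y ≤ G.diam := by
  have := hG.nonempty
  calc H.dist x y ≤ G.dist x y := (hG x y).dist_anti hGH
    _ ≤ G.diam := dist_le_diam (G.connected_iff_ediam_ne_top.mp hG)

lemma exists_walk_length_le_of_adj_or_eq {G : SimpleGraph V} (f : ℕ → V)
    (hf : ∀ t, f t = f (t + 1) ∨ G.Adj (f t) (f (t + 1))) :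
    ∀ m, ∃ p : G.Walk (f 0) (f m), p.length ≤ m
  | 0 => ⟨.nil, le_rfl⟩
  | m + 1 => by
    obtain ⟨p, hp⟩ := exists_walk_length_le_of_adj_or_eq f hf m
    rcases hf m with heq | hadj
    · exact ⟨p.copy rfl heq, by rw [Walk.length_copy]; omega⟩
    · exact ⟨p.concat hadj, by rw [Walk.length_concat]; omega⟩

lemma stronglyResolves_iff_dist_eq_natAbs {G : SimpleGraph V} {w u v : V} :
    stronglyResolves G w u v ↔ G.dist u v = ((G.dist u w : ℤ) - G.dist v w).natAbs := by
  have : G.dist v u = G.dist u v := dist_comm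
  unfold stronglyResolves
  omega

theorem Connected.isStrongResolvingSet_iff {G : SimpleGraph V} (hG : G.Connected)
    {W : Finset V} : isStrongResolvingSet G W ↔
      ∀ u v, G.dist u v = W.sup fun w => ((G.dist u w : ℤ) - G.dist v w).natAbs := by
  constructor
  · intro hW u v
    refine le_antisymm ?_ (Finset.sup_le fun w _ => hG.natAbs_dist_sub_dist_le u v w)
    by_cases huv : u = v
    · simp [huv]
    obtain ⟨w, hw, hres⟩ := hW u v huv
    exact (stronglyResolves_iff_dist_eq_natAbs.mp hres).trans_le
      (le_sup (f := fun w => ((G.dist u w : ℤ) - G.dist v w).natAbs) hw)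
  · intro hW u v huv
    have hpos := hG.pos_dist_of_ne huv
    rw [hW] at hpos
    obtain rfl | hne := W.eq_empty_or_nonempty
    · simp at hpos
    obtain ⟨w, hw, hmax⟩ := exists_mem_eq_sup W hne
      fun w => ((G.dist u w : ℤ) - G.dist v w).natAbs
    exact ⟨w, hw, stronglyResolves_iff_dist_eq_natAbs.mpr ((hW u v).trans hmax)⟩

lemma dist_le_dist_comap {K : SimpleGraph X} {φ : V → X} {x y : V}
    (h : (K.comap φ).Reachable x y) : K.dist (φ x) (φ y) ≤ (K.comap φ).dist x y := by
  obtain ⟨p, hp⟩ := h.exists_walk_length_eq_dist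
  rw [← hp, ← Walk.length_map (⟨φ, id⟩ : K.comap φ →g K)]
  exact dist_le _

section Isometry

variable {H : SimpleGraph V} {K : SimpleGraph X} {φ : V → X}

lemma injective_of_dist_eq (hH : H.Connected) (hφ : ∀ x y, K.dist (φ x) (φ y) = H.dist x y) :
    Function.Injective φ := fun x y hxy =>
  hH.dist_eq_zero_iff.mp (by rw [← hφ, hxy, dist_self])

lemma adj_of_dist_eq (hφ : ∀ x y, K.dist (φ x) (φ y) = H.dist x y) {x y : V} (h : H.Adj x y) :
    K.Adj (φ x) (φ y) := by
  rw [← dist_eq_one_iff_adj, hφ, dist_eq_one_iff_adj.mpr h]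

lemma dist_comap_eq_of_dist_eq (hH : H.Connected)
    (hφ : ∀ x y, K.dist (φ x) (φ y) = H.dist x y) (x y : V) :
    (K.comap φ).dist x y = H.dist x y := by
  have hle : H ≤ K.comap φ := fun _ _ => adj_of_dist_eq hφ
  refine le_antisymm ((hH x y).dist_anti hle) ?_
  rw [← hφ]
  exact dist_le_dist_comap ((hH x y).mono hle)

end Isometry

end SimpleGraph

open SimpleGraph

-- The `t`-th point of a shortest walk from `x` to `y`: each coordinate moves one step towards `y`.
def moveToward {n k : ℕ} (x y : Fin k → Fin n) (t : ℕ) : Fin k → Fin n := fun i =>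
  ⟨if (x i : ℕ) ≤ y i then min (x i + t) (y i) else max (x i - t) (y i), by
    have := (x i).isLt; have := (y i).isLt; split_ifs <;> omega⟩

lemma eq_or_strongPow_adj_iff {n k : ℕ} {x y : Fin k → Fin n} :
    x = y ∨ (strongPow n k).Adj x y ↔ ∀ i, ((x i : ℤ) - y i).natAbs ≤ 1 := by
  refine ⟨?_, fun h => or_iff_not_imp_left.mpr fun hne => ⟨hne, h⟩⟩
  rintro (rfl | h)
  · simp
  · exact h.2

theorem strongPow_dist_eq_sup {n k : ℕ} (x y : Fin k → Fin n) :
    (strongPow n k).dist x y = univ.sup fun i => ((x i : ℤ) - y i).natAbs := by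
  set M := univ.sup fun i => ((x i : ℤ) - y i).natAbs
  have hM : ∀ i, ((x i : ℤ) - y i).natAbs ≤ M := fun i =>
    le_sup (f := fun i => ((x i : ℤ) - y i).natAbs) (mem_univ i)
  have h0 : moveToward x y 0 = x := by
    ext i; simp only [moveToward]; split_ifs <;> omega
  have hM' : moveToward x y M = y := by
    ext i; have := hM i; simp only [moveToward]; split_ifs <;> omega
  have hstep : ∀ t, moveToward x y t = moveToward x y (t + 1) ∨
      (strongPow n k).Adj (moveToward x y t) (moveToward x y (t + 1)) := fun t =>
    eq_or_strongPow_adj_iff.mpr fun i => by simp only [moveToward]; split_ifs <;> omega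
  obtain ⟨p, hp⟩ := exists_walk_length_le_of_adj_or_eq _ hstep M
  refine le_antisymm ((dist_le (p.copy h0 hM')).trans (by rwa [Walk.length_copy]))
    (Finset.sup_le fun i _ => ?_)
  exact Reachable.natAbs_sub_le_dist (G := strongPow n k) (fun z => (z i : ℤ))
    (fun _ _ h => h.2 i) ⟨p.copy h0 hM'⟩

section Embedding

variable {V : Type*} [DecidableEq V] {G H : SimpleGraph V} {D k : ℕ} {w : Fin k → V}

lemma isWResolvedEmbedding_and_isIsometricImage_of_isStrongResolvingSet (hH : H.Connected)
    (hGH : G ≤ H) (hHD : ∀ x y, H.dist x y ≤ D) (hw : isStrongResolvingSet H ↑(univ.image w)) :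
    ∃ φ : V → (Fin k → Fin (D + 1)), IsWResolvedEmbedding G D k w φ ∧ IsIsometricImage D k φ := by
  set φ : V → (Fin k → Fin (D + 1)) := fun x i => ⟨H.dist x (w i), Nat.lt_succ_of_le (hHD _ _)⟩
  have hφ : ∀ x y, (strongPow (D + 1) k).dist (φ x) (φ y) = H.dist x y := fun x y => by
    rw [strongPow_dist_eq_sup, (hH.isStrongResolvingSet_iff.mp hw x y), sup_image]
    rfl
  refine ⟨φ, ⟨injective_of_dist_eq hH hφ, fun u v h => adj_of_dist_eq hφ (hGH h),
    fun x i => (dist_comap_eq_of_dist_eq hH hφ x (w i)).symm⟩, fun u v => ?_⟩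
  rw [dist_comap_eq_of_dist_eq hH hφ, hφ]

lemma isStrongResolvingSet_comap_of_isIsometricImage (hG : G.Connected)
    {φ : V → (Fin k → Fin (D + 1))} (hφ : IsWResolvedEmbedding G D k w φ)
    (hiso : IsIsometricImage D k φ) :
    isStrongResolvingSet ((strongPow (D + 1) k).comap φ) ↑(univ.image w) := by
  refine ((hG.mono fun u v h => hφ.2.1 u v h).isStrongResolvingSet_iff).mpr fun u v => ?_
  rw [hiso, strongPow_dist_eq_sup, sup_image]
  simp only [Function.comp_def, hφ.2.2]

end Embedding

/-- Geometric characterization of the threshold strong dimension. -/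
theorem thresholdStrongDim_eq_min_isometric_WResolvedEmbedding {V : Type*} [Fintype V]
    (G : SimpleGraph V) (hG : G.Connected) (D : ℕ) (hD : G.diam = D) :
    thresholdStrongDim V G =
      sInf {k : ℕ | ∃ w : Fin k → V, Function.Injective w ∧
        ∃ φ : V → (Fin k → Fin (D + 1)),
          IsWResolvedEmbedding G D k w φ ∧ IsIsometricImage D k φ} := by
  classical
  unfold thresholdStrongDim
  congr 1
  ext k
  constructor
  · rintro ⟨H, hGH, W, rfl, hW⟩
    obtain ⟨w, hw, hWw⟩ := W.exists_injective_image_univ_eq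
    rw [← hWw] at hW
    exact ⟨w, hw, isWResolvedEmbedding_and_isIsometricImage_of_isStrongResolvingSet
      (hG.mono hGH) hGH (hD ▸ hG.dist_le_diam_of_le hGH) hW⟩
  · rintro ⟨w, hw, φ, hφ, hiso⟩
    refine ⟨_, fun u v h => hφ.2.1 u v h, univ.image w, ?_,
      isStrongResolvingSet_comap_of_isIsometricImage hG hφ hiso⟩
    rw [card_image_of_injective _ hw, card_fin]
end

section
/- If T is a tree with n ≥ 2 vertices, then the threshold strong dimension of T satisfies τ_s(T) ≤ ⌈log_2 n⌉. -/
open SimpleGraph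

/-! Root the tree `T` at `r` and let `W` consist of `k = ⌈log₂ n⌉` vertices farthest from `r`.
A vertex of `W` has at most one neighbour outside `W` (its parent), so the sets of `W`-neighbours
of the vertices outside `W` are pairwise disjoint; since `n ≤ 2 ^ k` they extend to pairwise
distinct codes `β v ⊆ W`. Make `T` complete except that `w ∈ W` and `v ∉ W` stay adjacent only
when `w ∈ β v`. Two vertices `u, v ∉ W` are then told apart by some `w ∈ β u \ β v`:
`d(v, w) = 2 = d(v, u) + d(u, w)`, so `u` lies on a shortest `v`–`w` path. -/

open Finset

namespace SimpleGraph

variable {V : Type*} {G : SimpleGraph V}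

theorem IsAcyclic.eq_penultimate_of_adj_of_dist_lt (hG : G.IsAcyclic) {r w u : V}
    {p : G.Walk r w} (hp : p.IsPath) (hadj : G.Adj w u) (hd : G.dist r u < G.dist r w) :
    u = p.penultimate := by
  classical
  obtain ⟨q, hq, hqlen⟩ := (p.reachable.trans hadj.reachable).exists_path_of_dist
  have hw : w ∉ q.support := fun hw => by
    have := (dist_le (q.takeUntil w hw)).trans (q.length_takeUntil_le_length hw)
    omega
  exact hG.eq_penultimate_of_adj_end hp hadj
    (hG.mem_support_of_ne_mem_support_of_adj_of_isPath hp hq hadj hw)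

theorem IsAcyclic.eq_of_adj_of_dist_le (hG : G.IsAcyclic) {r w u₁ u₂ : V}
    (hr : G.Reachable r w) (h₁ : G.Adj w u₁) (h₂ : G.Adj w u₂)
    (hd₁ : G.dist r u₁ ≤ G.dist r w) (hd₂ : G.dist r u₂ ≤ G.dist r w) : u₁ = u₂ := by
  obtain ⟨p, hp, -⟩ := hr.exists_path_of_dist
  have hlt : ∀ {u}, G.Adj w u → G.dist r u ≤ G.dist r w → G.dist r u < G.dist r w :=
    fun h hd => hd.lt_of_ne (hG.dist_ne_of_adj h hr).symm
  rw [hG.eq_penultimate_of_adj_of_dist_lt hp h₁ (hlt h₁ hd₁),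
    hG.eq_penultimate_of_adj_of_dist_lt hp h₂ (hlt h₂ hd₂)]

theorem dist_eq_two_of_adj_of_adj {u v w : V} (huw : u ≠ w) (hn : ¬G.Adj u w)
    (huv : G.Adj u v) (hvw : G.Adj v w) : G.dist u w = 2 := by
  rw [dist, edist_eq_two_iff.mpr ⟨huw, hn, v, huv, hvw.symm⟩]
  rfl

end SimpleGraph

theorem Finset.exists_card_eq_forall_notMem_le {α β : Type*} [Fintype α] [LinearOrder β]
    (f : α → β) {k : ℕ} (hk : k ≤ Fintype.card α) :
    ∃ W : Finset α, #W = k ∧ ∀ w ∈ W, ∀ u ∉ W, f u ≤ f w := by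
  classical
  induction k with
  | zero => exact ⟨∅, rfl, by simp⟩
  | succ k ih =>
    obtain ⟨W, hW, hWf⟩ := ih (by omega)
    have hne : Wᶜ.Nonempty := by
      rw [← card_pos, card_compl]
      omega
    obtain ⟨m, hm, hmax⟩ := Wᶜ.exists_max_image f hne
    rw [mem_compl] at hm
    refine ⟨insert m W, by rw [card_insert_of_notMem hm, hW], ?_⟩
    simp only [mem_insert, not_or, forall_eq_or_imp]
    exact ⟨fun u hu => hmax u (mem_compl.mpr hu.2), fun w hw u hu => hWf w hw u hu.2⟩

theorem Finset.exists_injOn_superset_of_pairwiseDisjoint {α ι : Type*} [DecidableEq ι]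
    {s : Finset α} {t : Finset ι} {F : α → Finset ι} (hFt : ∀ v ∈ s, F v ⊆ t)
    (hF : (s : Set α).PairwiseDisjoint F) (hs : #s ≤ 2 ^ #t) :
    ∃ β : α → Finset ι, Set.InjOn β s ∧ ∀ v ∈ s, F v ⊆ β v ∧ β v ⊆ t := by
  classical
  set s₀ := s.filter (F · = ∅)
  set s₁ := s.filter (F · ≠ ∅)
  set free := t.powerset \ s₁.image F
  have hcard : #s₀ ≤ #free := by
    have hsplit : #s₀ + #s₁ = #s := card_filter_add_card_filter_not _
    have himage : #(s₁.image F) ≤ #s₁ := card_image_le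
    have hfree : 2 ^ #t - #(s₁.image F) ≤ #free := card_powerset t ▸ le_card_sdiff _ _
    omega
  obtain ⟨g, hg_free, hg_inj⟩ := (s₀ : Set α).toFinite.exists_injOn_of_encard_le
    (t := (free : Set (Finset ι)))
    (by simpa only [Set.encard_coe_eq_coe_finsetCard, Nat.cast_le] using hcard)
  have hg : ∀ v ∈ s, F v = ∅ → g v ⊆ t ∧ ∀ u ∈ s, F u ≠ ∅ → g v ≠ F u := by
    intro v hv hv₀
    have := hg_free (mem_filter.mpr ⟨hv, hv₀⟩)
    simp only [free, Set.mem_preimage, mem_coe, mem_sdiff, mem_powerset, mem_image] at this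
    exact ⟨this.1, fun u hu hu₀ h => this.2 ⟨u, mem_filter.mpr ⟨hu, hu₀⟩, h.symm⟩⟩
  refine ⟨fun v => if F v = ∅ then g v else F v, fun u hu v hv huv => ?_, fun v hv => ?_⟩
  · by_cases hu₀ : F u = ∅ <;> by_cases hv₀ : F v = ∅ <;>
      simp only [hu₀, hv₀, if_true, if_false] at huv
    · exact hg_inj (mem_filter.mpr ⟨hu, hu₀⟩) (mem_filter.mpr ⟨hv, hv₀⟩) huv
    · exact absurd huv ((hg u hu hu₀).2 v hv hv₀)
    · exact absurd huv.symm ((hg v hv hv₀).2 u hu hu₀)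
    · by_contra hne
      have := hF hu hv hne
      rw [Function.onFun, huv, disjoint_self] at this
      exact hv₀ this
  · by_cases hv₀ : F v = ∅
    · simpa [hv₀] using (hg v hv hv₀).1
    · simpa [hv₀] using hFt v hv

section HostGraph

variable {V : Type*}

def hostGraph (W : Finset V) (β : V → Finset V) : SimpleGraph V where
  Adj u v := u ≠ v ∧ (u ∈ W → v ∉ W → u ∈ β v) ∧ (v ∈ W → u ∉ W → v ∈ β u)
  symm := ⟨fun _ _ h => ⟨h.1.symm, h.2.2, h.2.1⟩⟩
  loopless := ⟨fun _ h => h.1 rfl⟩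

variable {W : Finset V} {β : V → Finset V}

theorem le_hostGraph {G : SimpleGraph V} (hG : ∀ w ∈ W, ∀ v ∉ W, G.Adj w v → w ∈ β v) :
    G ≤ hostGraph W β := fun u v huv =>
  ⟨huv.ne, fun hu hv => hG u hu v hv huv, fun hv hu => hG v hv u hu huv.symm⟩

theorem hostGraph_dist_eq_add {u v w : V} (hu : u ∉ W) (hv : v ∉ W) (huv : u ≠ v) (hw : w ∈ W)
    (hwu : w ∈ β u) (hwv : w ∉ β v) :
    (hostGraph W β).dist v w = (hostGraph W β).dist v u + (hostGraph W β).dist u w := by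
  have hvu : (hostGraph W β).Adj v u := ⟨huv.symm, by simp [hv], by simp [hu]⟩
  have huw : (hostGraph W β).Adj u w :=
    ⟨(ne_of_mem_of_not_mem hw hu).symm, by simp [hu], fun _ _ => hwu⟩
  have hvw : ¬(hostGraph W β).Adj v w := fun h => hwv (h.2.2 hw hv)
  rw [dist_eq_two_of_adj_of_adj (ne_of_mem_of_not_mem hw hv).symm hvw hvu huw,
    dist_eq_one_iff_adj.mpr hvu, dist_eq_one_iff_adj.mpr huw]

theorem isStrongResolvingSet_hostGraph (hβW : ∀ v ∉ W, β v ⊆ W)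
    (hβ : Set.InjOn β (↑W)ᶜ) : isStrongResolvingSet (hostGraph W β) ↑W := by
  intro u v huv
  by_cases hu : u ∈ W
  · exact ⟨u, hu, Or.inr (by rw [dist_self, add_zero])⟩
  by_cases hv : v ∈ W
  · exact ⟨v, hv, Or.inl (by rw [dist_self, add_zero])⟩
  obtain ⟨w, ⟨hwu, hwv⟩ | ⟨hwv, hwu⟩⟩ : ∃ w, (w ∈ β u ∧ w ∉ β v) ∨ (w ∈ β v ∧ w ∉ β u) := by
    by_contra! h
    exact huv (hβ hu hv (Finset.ext fun w => ⟨(h w).1, (h w).2⟩))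
  · exact ⟨w, hβW u hu hwu, Or.inr (hostGraph_dist_eq_add hu hv huv (hβW u hu hwu) hwu hwv)⟩
  · exact ⟨w, hβW v hv hwv, Or.inl (hostGraph_dist_eq_add hv hu huv.symm (hβW v hv hwv) hwv hwu)⟩

end HostGraph

theorem thresholdStrongDim_le_card {V : Type*} [Fintype V] {G H : SimpleGraph V} (hGH : G ≤ H)
    {W : Finset V} (hW : isStrongResolvingSet H ↑W) : thresholdStrongDim V G ≤ #W :=
  Nat.sInf_le ⟨H, hGH, W, rfl, hW⟩

theorem thresholdStrongDim_tree_le_clog_general {V : Type*} [Fintype V]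
    (T : SimpleGraph V) (hT : T.IsTree) :
    thresholdStrongDim V T ≤ Nat.clog 2 (Fintype.card V) := by
  classical
  obtain ⟨r⟩ := hT.connected.nonempty
  have hk : Nat.clog 2 (Fintype.card V) ≤ Fintype.card V :=
    Nat.clog_le_of_le_pow Nat.lt_two_pow_self.le
  obtain ⟨W, hWcard, hWfar⟩ := exists_card_eq_forall_notMem_le (T.dist r) hk
  have hdisj : ((Wᶜ : Finset V) : Set V).PairwiseDisjoint fun v => W.filter (T.Adj · v) := by
    intro u hu v hv huv
    refine disjoint_left.mpr fun w hwu hwv => huv ?_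
    rw [mem_filter] at hwu hwv
    exact hT.isAcyclic.eq_of_adj_of_dist_le (hT.connected r w) hwu.2 hwv.2
      (hWfar w hwu.1 u (mem_compl.mp hu)) (hWfar w hwv.1 v (mem_compl.mp hv))
  have hcodes : #Wᶜ ≤ 2 ^ #W := hWcard ▸ (card_le_univ _).trans (Nat.le_pow_clog one_lt_two _)
  obtain ⟨β, hβ, hFβ⟩ := exists_injOn_superset_of_pairwiseDisjoint (fun _ _ => filter_subset _ _)
    hdisj hcodes
  have hTβ : ∀ w ∈ W, ∀ v ∉ W, T.Adj w v → w ∈ β v := fun w hw v hv hwv =>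
    (hFβ v (mem_compl.mpr hv)).1 (mem_filter.mpr ⟨hw, hwv⟩)
  have hβW : ∀ v ∉ W, β v ⊆ W := fun v hv => (hFβ v (mem_compl.mpr hv)).2
  have hres := isStrongResolvingSet_hostGraph hβW (by simpa only [coe_compl] using hβ)
  exact hWcard ▸ thresholdStrongDim_le_card (le_hostGraph hTβ) hres

/-- If `T` is a tree with `n ≥ 2` vertices, then `τ_s(T) ≤ ⌈log₂ n⌉`. -/
theorem thresholdStrongDim_tree_le_clog {V : Type*} [Fintype V]
    (T : SimpleGraph V) (hT : T.IsTree) (hn : 2 ≤ Fintype.card V) :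
    thresholdStrongDim V T ≤ Nat.clog 2 (Fintype.card V) :=
  thresholdStrongDim_tree_le_clog_general T hT
end
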